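/- arXiv:2001.02818 — 3 statements merged into one kernel-verified Lean document; each statement's English description precedes it below -/
import Mathlib

section
/- Quantum Vernam cipher with a Pauli channel error: for every integer d ≥ 2, all integers j, k, and every vector |ψ⟩ ∈ ℂ^d, applying Alice's encoding (c-Z)_{A₂A}(c-X)_{A₁A}, then the Pauli error (X^j Z^k)_A on the message register, then Bob's decoding (c-X^{−1})_{B₁A}(c-Z^{−1})_{B₂A}, to the state |φ⟩_{A₁B₁} ⊗ |φ⟩_{A₂B₂} ⊗ |ψ⟩_A yields the state |φ^{0,k}⟩_{A₁B₁} ⊗ |φ^{0,−j}⟩_{A₂B₂} ⊗ X^j Z^k |ψ⟩_A. In particular, for j = k = 0 (no error) Bob recovers |ψ⟩ and both maximally entangled states remain intact. -/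
/-!
Every gate of the circuit acts on the message register `A` by a matrix that depends only on the
other registers, so the state keeps the form `p ↦ (F p *ᵥ ψ) (p A)` and each gate multiplies
`F p` on the left. On the support of `|φ⟩ ⊗ |φ⟩` we have `p A₁ = p B₁ = a` and `p A₂ = p B₂ = c`,
and there the accumulated operator is `X^{-a} Z^{-c} (X^j Z^k) Z^c X^a = ω^{ka} ω^{-jc} X^j Z^k`
by the Weyl relation `Z^m X^n = ω^{mn} X^n Z^m`. The phases `ω^{ka}` and `ω^{-jc}` are exactly
the diagonal entries of `Z^k` and `Z^{-j}`, which turn the two copies of `φ` into `φ^{0,k}` and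
`φ^{0,-j}`.
-/

open Matrix

noncomputable def ω (d : ℕ) : ℂ := Complex.exp (2 * Real.pi * Complex.I / d)

/-- The generalized Pauli `X` on `ℂ^d`: `X |k⟩ = |k+1 mod d⟩`. -/
def Xmat (d : ℕ) [NeZero d] : Matrix (ZMod d) (ZMod d) ℂ :=
  Matrix.of fun i k => if i = k + 1 then 1 else 0

def XmatInv (d : ℕ) [NeZero d] : Matrix (ZMod d) (ZMod d) ℂ :=
  Matrix.of fun i k => if k = i + 1 then 1 else 0

lemma Xmat_mul_XmatInv (d : ℕ) [NeZero d] : Xmat d * XmatInv d = 1 := by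
  ext i k
  rw [Matrix.mul_apply, Finset.sum_eq_single (i - 1)]
  · simp only [Xmat, XmatInv, Matrix.of_apply, sub_add_cancel, Matrix.one_apply]
    simp [eq_comm]
  · intro c _ hc
    have h : i ≠ c + 1 := fun h => hc (by rw [h, add_sub_cancel_right])
    simp [Xmat, Matrix.of_apply, h]
  · intro h; exact absurd (Finset.mem_univ _) h

/-- `X` as a unit (invertible matrix), so that integer powers `X ^ (j : ℤ)` make sense. -/
noncomputable def XU (d : ℕ) [NeZero d] : (Matrix (ZMod d) (ZMod d) ℂ)ˣ :=
  ⟨Xmat d, XmatInv d, Xmat_mul_XmatInv d, mul_eq_one_comm.mp (Xmat_mul_XmatInv d)⟩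

/-- The generalized Pauli `Z` on `ℂ^d`: `Z |k⟩ = ω^k |k⟩`. -/
noncomputable def Zmat (d : ℕ) [NeZero d] : Matrix (ZMod d) (ZMod d) ℂ :=
  Matrix.diagonal fun i => ω d ^ i.val

lemma omega_ne_zero (d : ℕ) : ω d ≠ 0 := Complex.exp_ne_zero _

/-- `Z` as a unit (invertible matrix). -/
noncomputable def ZU (d : ℕ) [NeZero d] : (Matrix (ZMod d) (ZMod d) ℂ)ˣ :=
  ⟨Zmat d, Matrix.diagonal fun i => (ω d ^ i.val)⁻¹,
   by
    rw [Zmat, Matrix.diagonal_mul_diagonal]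
    have h : (fun i : ZMod d => ω d ^ i.val * (ω d ^ i.val)⁻¹) = fun _ => (1 : ℂ) := by
      funext i
      exact mul_inv_cancel₀ (pow_ne_zero _ (omega_ne_zero d))
    rw [h, Matrix.diagonal_one],
   by
    rw [Zmat, Matrix.diagonal_mul_diagonal]
    have h : (fun i : ZMod d => (ω d ^ i.val)⁻¹ * ω d ^ i.val) = fun _ => (1 : ℂ) := by
      funext i
      exact inv_mul_cancel₀ (pow_ne_zero _ (omega_ne_zero d))
    rw [h, Matrix.diagonal_one]⟩

/-- Integer power `X^j` of the generalized Pauli `X`. -/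
noncomputable def Xpow (d : ℕ) [NeZero d] (j : ℤ) : Matrix (ZMod d) (ZMod d) ℂ := ↑(XU d ^ j)

/-- Integer power `Z^k` of the generalized Pauli `Z`. -/
noncomputable def Zpow (d : ℕ) [NeZero d] (k : ℤ) : Matrix (ZMod d) (ZMod d) ℂ := ↑(ZU d ^ k)

/-- The maximally entangled state `|φ⟩ = (1/√d) ∑ i, |i⟩⊗|i⟩` on `ℂ^d ⊗ ℂ^d`. -/
noncomputable def phi (d : ℕ) [NeZero d] : ZMod d × ZMod d → ℂ :=
  (1 / (Real.sqrt d : ℂ)) •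
    ∑ i : ZMod d, fun p : ZMod d × ZMod d =>
      (if p.1 = i then (1 : ℂ) else 0) * (if p.2 = i then 1 else 0)

/-- The Bell state `|φ^{j,k}⟩ = (X^j Z^k ⊗ I)|φ⟩` (exponents mod `d`). -/
noncomputable def bell (d : ℕ) [NeZero d] (j k : ℤ) : ZMod d × ZMod d → ℂ :=
  Matrix.mulVec
    (Matrix.kroneckerMap (· * ·) (Xpow d j * Zpow d k) (1 : Matrix (ZMod d) (ZMod d) ℂ))
    (phi d)

/-- Embed a two-qudit gate `G` into a multi-register system, acting on registers `r` (first
tensor factor of `G`) and `s` (second tensor factor of `G`), identity elsewhere. -/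
def gate2 {ι : Type*} [Fintype ι] [DecidableEq ι] (d : ℕ) [NeZero d]
    (G : Matrix (ZMod d × ZMod d) (ZMod d × ZMod d) ℂ) (r s : ι) :
    Matrix (ι → ZMod d) (ι → ZMod d) ℂ :=
  Matrix.of fun p q =>
    if ∀ t, t ≠ r → t ≠ s → p t = q t then G (p r, p s) (q r, q s) else 0

/-- Embed a single-qudit gate `M` into a multi-register system, acting on register `r`. -/
def gate1 {ι : Type*} [Fintype ι] [DecidableEq ι] (d : ℕ) [NeZero d]
    (M : Matrix (ZMod d) (ZMod d) ℂ) (r : ι) :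
    Matrix (ι → ZMod d) (ι → ZMod d) ℂ :=
  Matrix.of fun p q => if ∀ t, t ≠ r → p t = q t then M (p r) (q r) else 0

/-- The controlled gate `c-U` on `ℂ^d ⊗ ℂ^d`: `(c-U)|j⟩|k⟩ = |j⟩ ⊗ U^j |k⟩`, the first factor
being the control register. -/
noncomputable def ctrl (d : ℕ) [NeZero d] (U : (Matrix (ZMod d) (ZMod d) ℂ)ˣ) :
    Matrix (ZMod d × ZMod d) (ZMod d × ZMod d) ℂ :=
  Matrix.of fun p q =>
    if p.1 = q.1 then ((U ^ q.1.val : (Matrix (ZMod d) (ZMod d) ℂ)ˣ) : Matrix (ZMod d) (ZMod d) ℂ) p.2 q.2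
    else 0

theorem Units.val_zpow_eq_of_map_add {M : Type*} [Monoid M] (U : Mˣ) (f : ℤ → M) (h0 : f 0 = 1)
    (hadd : ∀ a b, f (a + b) = f a * f b) (h1 : f 1 = U) (n : ℤ) : ((U ^ n : Mˣ) : M) = f n := by
  let F : Multiplicative ℤ →* M :=
    { toFun := fun m => f m.toAdd, map_one' := h0, map_mul' := fun a b => hadd a.toAdd b.toAdd }
  have hF : (Units.coeHom M).comp (zpowersHom Mˣ U) = F :=
    MonoidHom.ext_mint (by simpa [F] using h1.symm)
  exact DFunLike.congr_fun hF (Multiplicative.ofAdd n)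

section Pauli

variable (d : ℕ) [NeZero d]

lemma isPrimitiveRoot_omega : IsPrimitiveRoot (ω d) d :=
  Complex.isPrimitiveRoot_exp d (NeZero.ne d)

variable {d} in
lemma omega_zpow_eq_of_intCast_eq {a b : ℤ} (h : (a : ZMod d) = b) : ω d ^ a = ω d ^ b := by
  have hdvd : (d : ℤ) ∣ a - b := (ZMod.intCast_eq_intCast_iff_dvd_sub b a d).1 h.symm
  rw [← div_eq_one_iff_eq (zpow_ne_zero _ (omega_ne_zero d)), ← zpow_sub₀ (omega_ne_zero d)]
  exact ((isPrimitiveRoot_omega d).zpow_eq_one_iff_dvd _).2 hdvd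

def shiftMat (a : ZMod d) : Matrix (ZMod d) (ZMod d) ℂ :=
  Matrix.of fun i k => if i = k + a then 1 else 0

lemma shiftMat_mul_shiftMat (a b : ZMod d) :
    shiftMat d a * shiftMat d b = shiftMat d (a + b) := by
  ext i k
  rw [Matrix.mul_apply, Finset.sum_eq_single (k + b)]
  · simp [shiftMat, add_assoc, add_comm b a]
  · intro c _ hc
    simp [shiftMat, hc]
  · simp

lemma Xpow_eq_shiftMat (n : ℤ) : Xpow d n = shiftMat d n := by
  refine Units.val_zpow_eq_of_map_add _ (fun n : ℤ => shiftMat d n) ?_ ?_ ?_ n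
  · ext i k
    simp [shiftMat, Matrix.one_apply]
  · intro a b
    simp only [Int.cast_add, shiftMat_mul_shiftMat]
  · ext i k
    simp [shiftMat, XU, Xmat]

lemma Zpow_eq_diagonal (m : ℤ) :
    Zpow d m = Matrix.diagonal fun i => ω d ^ (m * (i.val : ℤ)) := by
  refine Units.val_zpow_eq_of_map_add _
    (fun m : ℤ => Matrix.diagonal fun i : ZMod d => ω d ^ (m * (i.val : ℤ))) ?_ ?_ ?_ m
  · simp
  · intro a b
    simp only [Matrix.diagonal_mul_diagonal, add_mul, zpow_add₀ (omega_ne_zero d)]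
  · simp only [one_mul, zpow_natCast]
    rfl

lemma Zpow_mul_Xpow (m n : ℤ) :
    Zpow d m * Xpow d n = ω d ^ (m * n) • (Xpow d n * Zpow d m) := by
  ext i k
  simp only [Zpow_eq_diagonal, Xpow_eq_shiftMat, Matrix.diagonal_mul, Matrix.mul_diagonal,
    Matrix.smul_apply, shiftMat, Matrix.of_apply, smul_eq_mul]
  split_ifs with h
  · rw [mul_one, one_mul, ← zpow_add₀ (omega_ne_zero d)]
    apply omega_zpow_eq_of_intCast_eq
    push_cast [ZMod.natCast_val, ZMod.cast_id', h]
    ring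
  · simp

lemma Xpow_add (a b : ℤ) : Xpow d (a + b) = Xpow d a * Xpow d b := by
  rw [Xpow, Xpow, Xpow, _root_.zpow_add, Units.val_mul]

lemma Zpow_add (a b : ℤ) : Zpow d (a + b) = Zpow d a * Zpow d b := by
  rw [Zpow, Zpow, Zpow, _root_.zpow_add, Units.val_mul]

lemma Xpow_zero : Xpow d 0 = 1 := by
  rw [Xpow, zpow_zero, Units.val_one]

lemma Zpow_zero : Zpow d 0 = 1 := by
  rw [Zpow, zpow_zero, Units.val_one]

lemma Xpow_neg_mul_Zpow_mul_Xpow (a k : ℤ) :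
    Xpow d (-a) * Zpow d k * Xpow d a = ω d ^ (k * a) • Zpow d k := by
  rw [mul_assoc, Zpow_mul_Xpow, mul_smul_comm, ← mul_assoc, ← Xpow_add, neg_add_cancel, Xpow_zero,
    one_mul]

lemma Zpow_neg_mul_Xpow_mul_Zpow (c j : ℤ) :
    Zpow d (-c) * Xpow d j * Zpow d c = ω d ^ (-c * j) • Xpow d j := by
  rw [Zpow_mul_Xpow, smul_mul_assoc, mul_assoc, ← Zpow_add, neg_add_cancel, Zpow_zero, mul_one]

lemma Xpow_mul_Zpow_conj (j k a c : ℤ) :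
    Xpow d (-a) * (Zpow d (-c) * (Xpow d j * Zpow d k * (Zpow d c * Xpow d a))) =
      (ω d ^ (k * a) * ω d ^ (-j * c)) • (Xpow d j * Zpow d k) := by
  have hZ : Zpow d k * Zpow d c = Zpow d c * Zpow d k := by
    rw [← Zpow_add, ← Zpow_add, add_comm]
  have hX : Xpow d (-a) * Xpow d j = Xpow d j * Xpow d (-a) := by
    rw [← Xpow_add, ← Xpow_add, add_comm]
  calc Xpow d (-a) * (Zpow d (-c) * (Xpow d j * Zpow d k * (Zpow d c * Xpow d a)))
      = Xpow d (-a) * ((Zpow d (-c) * Xpow d j * Zpow d c) * (Zpow d k * Xpow d a)) := by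
        simp only [mul_assoc, ← mul_assoc (Zpow d k), hZ]
    _ = ω d ^ (-c * j) • (Xpow d j * (Xpow d (-a) * Zpow d k * Xpow d a)) := by
        rw [Zpow_neg_mul_Xpow_mul_Zpow, smul_mul_assoc, mul_smul_comm, ← mul_assoc, hX]
        simp only [mul_assoc]
    _ = (ω d ^ (k * a) * ω d ^ (-j * c)) • (Xpow d j * Zpow d k) := by
        rw [Xpow_neg_mul_Zpow_mul_Xpow, mul_smul_comm, smul_smul, mul_comm (-c) j, ← neg_mul_comm,
          mul_comm (ω d ^ _)]

lemma phi_apply (x y : ZMod d) :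
    phi d (x, y) = 1 / (Real.sqrt d : ℂ) * (1 : Matrix (ZMod d) (ZMod d) ℂ) x y := by
  simp [phi, Matrix.one_apply]

lemma kronecker_one_mulVec_phi (M : Matrix (ZMod d) (ZMod d) ℂ) (x y : ZMod d) :
    (Matrix.kroneckerMap (· * ·) M (1 : Matrix (ZMod d) (ZMod d) ℂ) *ᵥ phi d) (x, y) =
      1 / (Real.sqrt d : ℂ) * M x y := by
  simp [Matrix.mulVec, dotProduct, Fintype.sum_prod_type, phi_apply, Matrix.one_apply, mul_comm]

lemma bell_zero_apply (k : ℤ) (x y : ZMod d) :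
    bell d 0 k (x, y) = ω d ^ (k * (x.val : ℤ)) * phi d (x, y) := by
  rw [bell, Xpow_zero, one_mul, kronecker_one_mulVec_phi, Zpow_eq_diagonal, phi_apply]
  by_cases h : x = y
  · subst h; simp [mul_comm]
  · simp [h]

lemma bell_zero_zero : bell d 0 0 = phi d := by
  ext ⟨x, y⟩
  rw [bell_zero_apply, zero_mul, zpow_zero, one_mul]

lemma phi_eq_zero_of_ne {x y : ZMod d} (h : x ≠ y) : phi d (x, y) = 0 := by
  simp [phi_apply, h]

end Pauli

section Registers

variable {ι : Type*} [Fintype ι] [DecidableEq ι]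

lemma Fintype.sum_ite_agree_off_eq_sum_update {α M : Type*} [Fintype α] [DecidableEq α]
    [AddCommMonoid M] (p : ι → α) (s : ι) (g : (ι → α) → M) :
    (∑ q, if ∀ t, t ≠ s → p t = q t then g q else 0) = ∑ c, g (Function.update p s c) := by
  rw [← Finset.sum_filter]
  have hfilter : Finset.univ.filter (fun q => ∀ t, t ≠ s → p t = q t) =
      Finset.univ.image (Function.update p s) := by
    ext q
    simp [Function.update_eq_iff]
  rw [hfilter, Finset.sum_image fun _ _ _ _ h => Function.update_injective p s h]

variable (d : ℕ) [NeZero d]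

/-- `A` is the identity on every register but `s`, on which it acts by `M p`; as for a controlled
gate, `M p` may depend on the other registers. -/
def ActsOnRegister (A : Matrix (ι → ZMod d) (ι → ZMod d) ℂ) (s : ι)
    (M : (ι → ZMod d) → Matrix (ZMod d) (ZMod d) ℂ) : Prop :=
  ∀ p q, A p q = if ∀ t, t ≠ s → p t = q t then M p (p s) (q s) else 0

lemma gate1_actsOnRegister (M : Matrix (ZMod d) (ZMod d) ℂ) (s : ι) :
    ActsOnRegister d (gate1 d M s) s fun _ => M :=
  fun _ _ => rfl

lemma gate2_ctrl_actsOnRegister (U : (Matrix (ZMod d) (ZMod d) ℂ)ˣ) {r s : ι} (hrs : r ≠ s) :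
    ActsOnRegister d (gate2 d (ctrl d U) r s) s fun p => ↑(U ^ (p r).val) := by
  intro p q
  simp only [gate2, ctrl, Matrix.of_apply]
  by_cases h : ∀ t, t ≠ s → p t = q t
  · have h' : ∀ t, t ≠ r → t ≠ s → p t = q t := fun t _ hts => h t hts
    rw [if_pos h', if_pos (h r hrs), if_pos h, h r hrs]
  · rw [if_neg h]
    split_ifs with h' hr
    · exact absurd (fun t hts => if htr : t = r then htr ▸ hr else h' t htr hts) h
    · rfl
    · rfl

variable {d}

lemma ActsOnRegister.mulVec_eq {A : Matrix (ι → ZMod d) (ι → ZMod d) ℂ} {s : ι}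
    {M : (ι → ZMod d) → Matrix (ZMod d) (ZMod d) ℂ} (hA : ActsOnRegister d A s M)
    (F : (ι → ZMod d) → Matrix (ZMod d) (ZMod d) ℂ) (hF : ∀ p c, F (Function.update p s c) = F p)
    (ψ : ZMod d → ℂ) :
    A *ᵥ (fun p => (F p *ᵥ ψ) (p s)) = fun p => ((M p * F p) *ᵥ ψ) (p s) := by
  funext p
  rw [← Matrix.mulVec_mulVec]
  simp only [Matrix.mulVec, dotProduct, hA p, ite_mul, zero_mul]
  rw [Fintype.sum_ite_agree_off_eq_sum_update]
  simp only [Function.update_self, hF]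

end Registers

section Vernam

variable (d : ℕ) [NeZero d]

lemma vernam_decoded_matrix (j k : ℤ) (a b c e : ZMod d) :
    Xpow d (-(b.val : ℤ)) * (Zpow d (-(e.val : ℤ)) * (Xpow d j * Zpow d k *
      (Zpow d c.val * (Xpow d a.val * ((phi d (a, b) * phi d (c, e)) • 1))))) =
      (bell d 0 k (a, b) * bell d 0 (-j) (c, e)) • (Xpow d j * Zpow d k) := by
  simp only [mul_smul_comm, mul_one, bell_zero_apply]
  rcases eq_or_ne a b with rfl | hab
  · rcases eq_or_ne c e with rfl | hce
    · rw [Xpow_mul_Zpow_conj, smul_smul]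
      congr 1
      ring
    · simp [phi_eq_zero_of_ne d hce]
  · simp [phi_eq_zero_of_ne d hab]

lemma vernam_circuit_mulVec (j k : ℤ) (ψ : ZMod d → ℂ) :
    Matrix.mulVec
        (gate2 d (ctrl d (XU d)⁻¹) (1 : Fin 5) 4 * gate2 d (ctrl d (ZU d)⁻¹) (3 : Fin 5) 4 *
          gate1 d (Xpow d j * Zpow d k) (4 : Fin 5) *
          gate2 d (ctrl d (ZU d)) (2 : Fin 5) 4 * gate2 d (ctrl d (XU d)) (0 : Fin 5) 4)
        (fun p : Fin 5 → ZMod d => phi d (p 0, p 1) * phi d (p 2, p 3) * ψ (p 4)) =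
      fun p : Fin 5 → ZMod d =>
        bell d 0 k (p 0, p 1) * bell d 0 (-j) (p 2, p 3) *
          Matrix.mulVec (Xpow d j * Zpow d k) ψ (p 4) := by
  have hinit : (fun p : Fin 5 → ZMod d => phi d (p 0, p 1) * phi d (p 2, p 3) * ψ (p 4)) = fun p =>
      (((phi d (p 0, p 1) * phi d (p 2, p 3)) • 1 : Matrix (ZMod d) (ZMod d) ℂ) *ᵥ ψ) (p 4) := by
    simp [Matrix.smul_mulVec]
  rw [hinit, ← Matrix.mulVec_mulVec, ← Matrix.mulVec_mulVec, ← Matrix.mulVec_mulVec,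
    ← Matrix.mulVec_mulVec,
    (gate2_ctrl_actsOnRegister d (XU d) (by decide : (0 : Fin 5) ≠ 4)).mulVec_eq,
    (gate2_ctrl_actsOnRegister d (ZU d) (by decide : (2 : Fin 5) ≠ 4)).mulVec_eq,
    (gate1_actsOnRegister d (Xpow d j * Zpow d k) (4 : Fin 5)).mulVec_eq,
    (gate2_ctrl_actsOnRegister d (ZU d)⁻¹ (by decide : (3 : Fin 5) ≠ 4)).mulVec_eq,
    (gate2_ctrl_actsOnRegister d (XU d)⁻¹ (by decide : (1 : Fin 5) ≠ 4)).mulVec_eq]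
  · funext p
    -- fold the unit powers produced by `ctrl` back into `Xpow` and `Zpow`
    simp only [← zpow_natCast, _root_.inv_zpow', ← Xpow.eq_1, ← Zpow.eq_1]
    rw [vernam_decoded_matrix, Matrix.smul_mulVec, Pi.smul_apply, smul_eq_mul]
  -- each accumulated operator only involves the registers other than `A = 4`
  all_goals
    intro p c
    simp

end Vernam

/-- Registers are ordered `A₁ = 0`, `B₁ = 1`, `A₂ = 2`, `B₂ = 3`, `A = 4`. -/
theorem quantum_vernam_cipher_general (d : ℕ) [NeZero d] (j k : ℤ) (ψ : ZMod d → ℂ) :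
    (Matrix.mulVec
        (gate2 d (ctrl d (XU d)⁻¹) (1 : Fin 5) 4 * gate2 d (ctrl d (ZU d)⁻¹) (3 : Fin 5) 4 *
          gate1 d (Xpow d j * Zpow d k) (4 : Fin 5) *
          gate2 d (ctrl d (ZU d)) (2 : Fin 5) 4 * gate2 d (ctrl d (XU d)) (0 : Fin 5) 4)
        (fun p : Fin 5 → ZMod d => phi d (p 0, p 1) * phi d (p 2, p 3) * ψ (p 4)) =
      fun p : Fin 5 → ZMod d =>
        bell d 0 k (p 0, p 1) * bell d 0 (-j) (p 2, p 3) *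
          Matrix.mulVec (Xpow d j * Zpow d k) ψ (p 4)) ∧
    Matrix.mulVec
        (gate2 d (ctrl d (XU d)⁻¹) (1 : Fin 5) 4 * gate2 d (ctrl d (ZU d)⁻¹) (3 : Fin 5) 4 *
          gate1 d (Xpow d 0 * Zpow d 0) (4 : Fin 5) *
          gate2 d (ctrl d (ZU d)) (2 : Fin 5) 4 * gate2 d (ctrl d (XU d)) (0 : Fin 5) 4)
        (fun p : Fin 5 → ZMod d => phi d (p 0, p 1) * phi d (p 2, p 3) * ψ (p 4)) =
      fun p : Fin 5 → ZMod d => phi d (p 0, p 1) * phi d (p 2, p 3) * ψ (p 4) := by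
  refine ⟨vernam_circuit_mulVec d j k ψ, ?_⟩
  rw [vernam_circuit_mulVec, neg_zero, bell_zero_zero, Xpow_zero, Zpow_zero, mul_one,
    Matrix.one_mulVec]

/-- **Quantum Vernam cipher with a Pauli channel error.**
Registers are ordered `A₁ = 0`, `B₁ = 1`, `A₂ = 2`, `B₂ = 3`, `A = 4`.  Applying Alice's
encoding `(c-Z)_{A₂A}(c-X)_{A₁A}`, then the Pauli error `(X^j Z^k)_A`, then Bob's decoding
`(c-X⁻¹)_{B₁A}(c-Z⁻¹)_{B₂A}`, to `|φ⟩_{A₁B₁} ⊗ |φ⟩_{A₂B₂} ⊗ |ψ⟩_A` yields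
`|φ^{0,k}⟩_{A₁B₁} ⊗ |φ^{0,−j}⟩_{A₂B₂} ⊗ X^j Z^k |ψ⟩_A`.  In particular, for `j = k = 0`
Bob recovers `|ψ⟩` and both maximally entangled states remain intact. -/
theorem quantum_vernam_cipher (d : ℕ) [NeZero d] (hd : 2 ≤ d) (j k : ℤ) (ψ : ZMod d → ℂ) :
    (Matrix.mulVec
        (gate2 d (ctrl d (XU d)⁻¹) (1 : Fin 5) 4 * gate2 d (ctrl d (ZU d)⁻¹) (3 : Fin 5) 4 *
          gate1 d (Xpow d j * Zpow d k) (4 : Fin 5) *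
          gate2 d (ctrl d (ZU d)) (2 : Fin 5) 4 * gate2 d (ctrl d (XU d)) (0 : Fin 5) 4)
        (fun p : Fin 5 → ZMod d => phi d (p 0, p 1) * phi d (p 2, p 3) * ψ (p 4)) =
      fun p : Fin 5 → ZMod d =>
        bell d 0 k (p 0, p 1) * bell d 0 (-j) (p 2, p 3) *
          Matrix.mulVec (Xpow d j * Zpow d k) ψ (p 4)) ∧
    Matrix.mulVec
        (gate2 d (ctrl d (XU d)⁻¹) (1 : Fin 5) 4 * gate2 d (ctrl d (ZU d)⁻¹) (3 : Fin 5) 4 *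
          gate1 d (Xpow d 0 * Zpow d 0) (4 : Fin 5) *
          gate2 d (ctrl d (ZU d)) (2 : Fin 5) 4 * gate2 d (ctrl d (XU d)) (0 : Fin 5) 4)
        (fun p : Fin 5 → ZMod d => phi d (p 0, p 1) * phi d (p 2, p 3) * ψ (p 4)) =
      fun p : Fin 5 → ZMod d => phi d (p 0, p 1) * phi d (p 2, p 3) * ψ (p 4) :=
  quantum_vernam_cipher_general d j k ψ
end

section
/- Quantum-hash state collapse: let d ≥ 2, m ∈ ℕ, k₁, …, k_m ∈ {0, …, d−1}, and S ⊆ {1, …, m}. Applying, for each i ∈ S, the pair of controlled-X gates (c-X)_{A₀A_i} and (c-X)_{B₀B_i} to the state |φ^{0,0}⟩_{A₀B₀} ⊗ |φ^{0,k₁}⟩_{A₁B₁} ⊗ ⋯ ⊗ |φ^{0,k_m}⟩_{A_mB_m} produces the state |φ^{0, −Σ_{i∈S} k_i}⟩_{A₀B₀} ⊗ |φ^{0,k₁}⟩_{A₁B₁} ⊗ ⋯ ⊗ |φ^{0,k_m}⟩_{A_mB_m}; in particular the states on the registers A₁B₁, …, A_mB_m remain unchanged. -/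
/-!
The controlled-`X` gate is the permutation matrix of the shear `(a, b) ↦ (a, b - a)`, so the
gate pair `(c-X)_{A₀A_i} (c-X)_{B₀B_i}` acts on a state by substituting
`(a_i, b_i) ↦ (a_i - a_0, b_i - b_0)`. The Bell state `|φ^{0,k}⟩` is supported on the diagonal,
with amplitude `ψ(a)^k / √d` at `(a, a)`, where `ψ = ZMod.stdAddChar` is the character `a ↦ ω^a`.
Since `ψ(a_i - a_0)^{k_i} = ψ(a_i)^{k_i} ψ(a_0)^{-k_i}`, the substitution leaves the pair
`A_iB_i` in `|φ^{0,k_i}⟩` and lowers the phase exponent of `A₀B₀` by `k_i` (phase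
kickback); the kickbacks of the gate pairs add up.
-/

open Matrix

section Pauli

variable (d : ℕ) [NeZero d]

lemma omega_pow_val_eq_stdAddChar (a : ZMod d) : ω d ^ a.val = ZMod.stdAddChar a := by
  rw [ZMod.stdAddChar_apply, ZMod.toCircle_apply, ω, ← Complex.exp_nat_mul]
  congr 1
  ring

lemma Zpow_eq_diagonal_s9 (K : ℤ) : Zpow d K = diagonal fun a => ZMod.stdAddChar a ^ K := by
  have hz : IsUnit fun a : ZMod d => ω d ^ a.val :=
    Pi.isUnit_iff.2 fun a => (pow_ne_zero _ (omega_ne_zero d)).isUnit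
  have hZU : ZU d = Units.map (diagonalRingHom (ZMod d) ℂ : (ZMod d → ℂ) →* _) hz.unit :=
    Units.ext rfl
  rw [Zpow, hZU, ← map_zpow, Units.coe_map, Units.val_zpow_eq_zpow_val]
  simp [omega_pow_val_eq_stdAddChar]

lemma XU_pow_eq_permMatrix (n : ℕ) :
    ((XU d ^ n : (Matrix (ZMod d) (ZMod d) ℂ)ˣ) : Matrix (ZMod d) (ZMod d) ℂ) =
      Equiv.Perm.permMatrix ℂ (Equiv.subRight (n : ZMod d)) := by
  have hX : Xmat d = permMatrixHom (Equiv.addRight 1) := by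
    ext i k
    simp [Xmat, Equiv.toPEquiv_apply, ← sub_eq_add_neg, sub_eq_iff_eq_add]
  rw [Units.val_pow_eq_pow_val]
  change Xmat d ^ n = _
  rw [hX, ← map_pow, Equiv.nsmul_addRight, nsmul_one, permMatrixHom_apply, Equiv.neg_addRight]
  congr 1
  ext x
  exact (sub_eq_add_neg x _).symm

lemma ctrl_XU_eq_permMatrix :
    ctrl d (XU d) = Equiv.Perm.permMatrix ℂ
      (Equiv.prodShear (Equiv.refl _) fun a : ZMod d => Equiv.subRight a) := by
  ext p q
  simp only [ctrl, of_apply, XU_pow_eq_permMatrix, ZMod.natCast_zmod_val]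
  by_cases h : p.1 = q.1 <;> simp [Equiv.toPEquiv_apply, Prod.ext_iff, h]

end Pauli

section Bell

variable {d : ℕ} [NeZero d]

lemma phi_apply_s9 (a b : ZMod d) : phi d (a, b) = if a = b then 1 / (√d : ℂ) else 0 := by
  simp [phi, Finset.sum_apply]

lemma bell_zero_apply_s9 (K : ℤ) (x : ZMod d × ZMod d) :
    bell d 0 K x = if x.1 = x.2 then ZMod.stdAddChar x.1 ^ K / √d else 0 := by
  rw [bell, Xpow, zpow_zero, Units.val_one, one_mul, Zpow_eq_diagonal_s9, ← diagonal_one,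
    diagonal_kronecker_diagonal, mulVec_diagonal, phi_apply_s9]
  split_ifs <;> simp_all [div_eq_mul_inv]

lemma bell_zero_mul_bell_zero_sub (K k : ℤ) (x y : ZMod d × ZMod d) :
    bell d 0 K x * bell d 0 k (y - x) = bell d 0 (K - k) x * bell d 0 k y := by
  obtain ⟨a, b⟩ := x
  obtain ⟨c, e⟩ := y
  simp only [bell_zero_apply_s9, Prod.mk_sub_mk]
  by_cases hab : a = b
  · subst hab
    by_cases hce : c = e
    · subst hce
      have ha : (ZMod.stdAddChar a : ℂ) ≠ 0 := Circle.coe_ne_zero _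
      simp only [if_true, AddChar.map_sub_eq_div, div_zpow, zpow_sub₀ ha]
      field_simp
    · simp [hce]
  · simp [hab]

end Bell

section Gates

variable {d : ℕ} [NeZero d] {ι : Type*} [Fintype ι] [DecidableEq ι]

lemma gate2_permMatrix_apply (τ : Equiv.Perm (ZMod d × ZMod d)) {r s : ι} (hrs : r ≠ s)
    (p q : ι → ZMod d) :
    gate2 d (τ.permMatrix ℂ) r s p q =
      if Function.update (Function.update p r (τ (p r, p s)).1) s (τ (p r, p s)).2 = q
      then 1 else 0 := by
  simp only [gate2, of_apply, PEquiv.toMatrix_apply, Equiv.toPEquiv_apply, Option.mem_def,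
    Option.some.injEq, ← ite_and]
  congr 1
  apply propext
  constructor
  · rintro ⟨hrest, hτ⟩
    funext t
    by_cases hts : t = s
    · subst hts
      simp [hτ]
    by_cases htr : t = r
    · subst htr
      simp [hts, hτ]
    simp [hts, htr, hrest t htr hts]
  · rintro rfl
    exact ⟨fun t htr hts => by simp [htr, hts], by simp [hrs]⟩

lemma gate2_permMatrix_mulVec (τ : Equiv.Perm (ZMod d × ZMod d)) {r s : ι} (hrs : r ≠ s)
    (v : (ι → ZMod d) → ℂ) (p : ι → ZMod d) :
    (gate2 d (τ.permMatrix ℂ) r s *ᵥ v) p =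
      v (Function.update (Function.update p r (τ (p r, p s)).1) s (τ (p r, p s)).2) := by
  simp [mulVec, dotProduct, gate2_permMatrix_apply τ hrs]

lemma gate2_ctrl_XU_mulVec {r s : ι} (hrs : r ≠ s) (v : (ι → ZMod d) → ℂ)
    (p : ι → ZMod d) :
    (gate2 d (ctrl d (XU d)) r s *ᵥ v) p = v (Function.update p s (p s - p r)) := by
  simp [ctrl_XU_eq_permMatrix, gate2_permMatrix_mulVec _ hrs]

end Gates

section HashState

variable (d : ℕ) [NeZero d]

noncomputable def ctrlXPair {ι : Type*} [Fintype ι] [DecidableEq ι] (r s : ι) :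
    Matrix (ι × Bool → ZMod d) (ι × Bool → ZMod d) ℂ :=
  gate2 d (ctrl d (XU d)) (r, false) (s, false) * gate2 d (ctrl d (XU d)) (r, true) (s, true)

lemma ctrlXPair_mulVec {ι : Type*} [Fintype ι] [DecidableEq ι] {r s : ι} (hrs : r ≠ s)
    (v : (ι × Bool → ZMod d) → ℂ) (p : ι × Bool → ZMod d) :
    (ctrlXPair d r s *ᵥ v) p = v fun t => if t.1 = s then p t - p (r, t.2) else p t := by
  rw [ctrlXPair, ← mulVec_mulVec, gate2_ctrl_XU_mulVec (by simpa using hrs),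
    gate2_ctrl_XU_mulVec (by simpa using hrs)]
  congr 1
  funext ⟨j, b⟩
  by_cases hj : j = s
  · subst hj
    cases b <;> simp [hrs]
  · simp [hj]

variable {m : ℕ}

noncomputable def hashState (K : ℤ) (k : Fin m → ℤ) : (Fin (m + 1) × Bool → ZMod d) → ℂ :=
  fun p => bell d 0 K (p (0, false), p (0, true)) *
    ∏ i : Fin m, bell d 0 (k i) (p (i.succ, false), p (i.succ, true))

lemma ctrlXPair_mulVec_hashState (K : ℤ) (k : Fin m → ℤ) (i : Fin m) :
    ctrlXPair d 0 i.succ *ᵥ hashState d K k = hashState d (K - k i) k := by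
  funext p
  have h0 : (0 : Fin (m + 1)) ≠ i.succ := (Fin.succ_ne_zero i).symm
  rw [ctrlXPair_mulVec d h0]
  simp only [hashState, Fin.succ_inj, h0, if_false]
  rw [Fintype.prod_eq_mul_prod_compl i, Fintype.prod_eq_mul_prod_compl i, if_pos rfl, if_pos rfl,
    ← Prod.mk_sub_mk, ← mul_assoc, bell_zero_mul_bell_zero_sub, mul_assoc]
  congr 2
  refine Finset.prod_congr rfl fun j hj => ?_
  have hji : j ≠ i := by simpa using hj
  simp only [hji, if_false]

lemma list_prod_ctrlXPair_mulVec_hashState (K : ℤ) (k : Fin m → ℤ) (l : List (Fin m)) :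
    (l.map fun i => ctrlXPair d 0 i.succ).prod *ᵥ hashState d K k =
      hashState d (K - (l.map k).sum) k := by
  induction l generalizing K with
  | nil => simp
  | cons i l ih =>
    rw [List.map_cons, List.prod_cons, ← mulVec_mulVec, ih, ctrlXPair_mulVec_hashState,
      List.map_cons, List.sum_cons, sub_sub, add_comm (k i)]

end HashState

/-- Registers are indexed by `Fin (m+1) × Bool`, with `(i, false) = A_i` and `(i, true) = B_i`;
the list `l` enumerates `S` in the order the gate pairs are applied. -/
theorem quantum_hash_collapse_general (d : ℕ) [NeZero d] (m : ℕ)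
    (k : Fin m → Fin d) (S : Finset (Fin m)) (l : List (Fin m))
    (hnd : l.Nodup) (hlS : l.toFinset = S) :
    Matrix.mulVec
        ((l.map fun i : Fin m =>
            gate2 d (ctrl d (XU d)) ((0 : Fin (m + 1)), false) (i.succ, false) *
              gate2 d (ctrl d (XU d)) ((0 : Fin (m + 1)), true) (i.succ, true)).prod)
        (fun p : Fin (m + 1) × Bool → ZMod d =>
          bell d 0 0 (p (0, false), p (0, true)) *
            ∏ i : Fin m, bell d 0 ((k i : ℕ) : ℤ) (p (i.succ, false), p (i.succ, true))) =
      fun p : Fin (m + 1) × Bool → ZMod d =>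
        bell d 0 (-∑ i ∈ S, ((k i : ℕ) : ℤ)) (p (0, false), p (0, true)) *
          ∏ i : Fin m, bell d 0 ((k i : ℕ) : ℤ) (p (i.succ, false), p (i.succ, true)) := by
  have h := list_prod_ctrlXPair_mulVec_hashState d 0 (fun i => ((k i : ℕ) : ℤ)) l
  rw [zero_sub, ← List.sum_toFinset _ hnd, hlS] at h
  exact h

/-- **Quantum-hash state collapse.**  Registers are indexed by
`Fin (m+1) × Bool`, with `(i, false) = A_i` and `(i, true) = B_i`.  Applying, for each
`i ∈ S ⊆ {1, …, m}` (the gates all commute, so any enumeration `l` of `S` gives the same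
operator), the pair of controlled-`X` gates `(c-X)_{A₀A_i}` and `(c-X)_{B₀B_i}` to
`|φ^{0,0}⟩_{A₀B₀} ⊗ |φ^{0,k₁}⟩_{A₁B₁} ⊗ ⋯ ⊗ |φ^{0,k_m}⟩_{A_mB_m}` produces
`|φ^{0, −∑_{i∈S} k_i}⟩_{A₀B₀} ⊗ |φ^{0,k₁}⟩_{A₁B₁} ⊗ ⋯ ⊗ |φ^{0,k_m}⟩_{A_mB_m}`;
in particular the states on `A₁B₁, …, A_mB_m` remain unchanged. -/
theorem quantum_hash_collapse (d : ℕ) [NeZero d] (hd : 2 ≤ d) (m : ℕ)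
    (k : Fin m → Fin d) (S : Finset (Fin m)) (l : List (Fin m))
    (hnd : l.Nodup) (hlS : l.toFinset = S) :
    Matrix.mulVec
        ((l.map fun i : Fin m =>
            gate2 d (ctrl d (XU d)) ((0 : Fin (m + 1)), false) (i.succ, false) *
              gate2 d (ctrl d (XU d)) ((0 : Fin (m + 1)), true) (i.succ, true)).prod)
        (fun p : Fin (m + 1) × Bool → ZMod d =>
          bell d 0 0 (p (0, false), p (0, true)) *
            ∏ i : Fin m, bell d 0 ((k i : ℕ) : ℤ) (p (i.succ, false), p (i.succ, true))) =
      fun p : Fin (m + 1) × Bool → ZMod d =>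
        bell d 0 (-∑ i ∈ S, ((k i : ℕ) : ℤ)) (p (0, false), p (0, true)) *
          ∏ i : Fin m, bell d 0 ((k i : ℕ) : ℤ) (p (i.succ, false), p (i.succ, true)) :=
  quantum_hash_collapse_general d m k S l hnd hlS
end

section
/- Quantum hash collision probability with a δ-biased seed: let d ≥ 2 and m ≥ 1 be integers, let k = (k₁, …, k_m) with each k_i ∈ {0, …, d−1} and k ≠ 0^m, let δ ∈ (0,1), and let S = (S₁, …, S_m) be a δ-biased random variable on {0,1}^m. Then Pr[ Σ_{i=1}^m S_i k_i ≡ 0 (mod d) ] ≤ 1/2 + 2^{m/2} · δ. -/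
/-- The bias of a subset `J ⊆ [m]` with respect to a distribution `S` on `{0,1}^m`:
`bias_J(S) = |Pr[∑_{i∈J} S_i ≡ 1 (mod 2)] − Pr[∑_{i∈J} S_i ≡ 0 (mod 2)]|`, with
`bias_∅(S) = 0`. -/
noncomputable def biasJ (m : ℕ) (J : Finset (Fin m)) (S : (Fin m → Bool) → ℝ) : ℝ :=
  if J = ∅ then 0
  else
    |(∑ s ∈ Finset.univ.filter
          (fun s : Fin m → Bool => (J.filter fun i => s i = true).card % 2 = 1), S s) -
      ∑ s ∈ Finset.univ.filter
          (fun s : Fin m → Bool => (J.filter fun i => s i = true).card % 2 = 0), S s|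

/-!
Flipping a coordinate `i` with `k i ≠ 0` changes the hash `∑ S_i k_i` by `±k i`, so it maps
collisions injectively to non-collisions: collisions form at most half of `{0,1}^m`. The deviation
`f = S - U` of a `δ`-biased `S` from the uniform distribution `U` has mean zero and all other Walsh
coefficients bounded by `δ`, so Parseval gives `‖f‖₂ ≤ δ`, and Cauchy–Schwarz gives
`S(A) ≤ U(A) + 2^{m/2} δ` for every set `A`.
-/

open Finset

section Walsh

variable {ι : Type*}

def walsh (J : Finset ι) (s : ι → Bool) : ℝ := ∏ i ∈ J, if s i then -1 else 1

def walshCoeff [Fintype ι] [DecidableEq ι] (f : (ι → Bool) → ℝ) (J : Finset ι) : ℝ :=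
  ∑ s, f s * walsh J s

def flipAt [DecidableEq ι] (i : ι) (s : ι → Bool) : ι → Bool := Function.update s i (!s i)

theorem walsh_eq_neg_one_pow (J : Finset ι) (s : ι → Bool) :
    walsh J s = (-1) ^ #{i ∈ J | s i} := by
  rw [walsh, prod_ite, prod_const, prod_const_one, mul_one]

@[simp]
theorem walsh_empty (s : ι → Bool) : walsh ∅ s = 1 := prod_empty

theorem flipAt_involutive [DecidableEq ι] (i : ι) : Function.Involutive (flipAt i) := by
  intro s
  simp [flipAt]

@[simp]
theorem flipAt_self [DecidableEq ι] (i : ι) (s : ι → Bool) : flipAt i s i = !s i :=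
  Function.update_self _ _ _

theorem flipAt_of_ne [DecidableEq ι] {i j : ι} (h : j ≠ i) (s : ι → Bool) :
    flipAt i s j = s j :=
  Function.update_of_ne h _ _

theorem walsh_flipAt [DecidableEq ι] {J : Finset ι} {i : ι} (hi : i ∈ J) (s : ι → Bool) :
    walsh J (flipAt i s) = -walsh J s := by
  rw [walsh, walsh, ← mul_prod_erase J _ hi, ← mul_prod_erase J _ hi,
    prod_congr rfl fun j hj => by rw [flipAt_of_ne (ne_of_mem_erase hj)], flipAt_self]
  cases s i <;> simp

theorem sum_walsh_eq_zero [Fintype ι] [DecidableEq ι] {J : Finset ι} (hJ : J.Nonempty) :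
    ∑ s, walsh J s = 0 := by
  obtain ⟨i, hi⟩ := hJ
  have h := Equiv.sum_comp (flipAt_involutive i).toPerm (walsh J)
  simp only [Function.Involutive.coe_toPerm, walsh_flipAt hi, sum_neg_distrib] at h
  linarith

theorem walsh_mul_walsh (J : Finset ι) (s t : ι → Bool) :
    walsh J s * walsh J t = ∏ i ∈ J, if s i = t i then 1 else -1 := by
  rw [walsh, walsh, ← prod_mul_distrib]
  refine prod_congr rfl fun i _ => ?_
  cases s i <;> cases t i <;> norm_num

theorem sum_walsh_mul_walsh [Fintype ι] [DecidableEq ι] (s t : ι → Bool) :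
    ∑ J, walsh J s * walsh J t = if s = t then 2 ^ Fintype.card ι else 0 := by
  simp_rw [walsh_mul_walsh, ← powerset_univ, ← prod_one_add]
  split_ifs with hst
  · simp [hst, one_add_one_eq_two]
  · obtain ⟨i, hi⟩ := Function.ne_iff.1 hst
    exact prod_eq_zero (mem_univ i) (by simp [hi])

theorem sum_walshCoeff_sq [Fintype ι] [DecidableEq ι] (f : (ι → Bool) → ℝ) :
    ∑ J, walshCoeff f J ^ 2 = 2 ^ Fintype.card ι * ∑ s, f s ^ 2 := by
  calc ∑ J, walshCoeff f J ^ 2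
      = ∑ J, ∑ s, ∑ t, f s * f t * (walsh J s * walsh J t) := by
        simp_rw [walshCoeff, sq, sum_mul_sum]
        exact sum_congr rfl fun _ _ => sum_congr rfl fun _ _ => sum_congr rfl fun _ _ => by ring
    _ = ∑ s, ∑ t, f s * f t * ∑ J, walsh J s * walsh J t := by
        rw [sum_comm]
        simp_rw [mul_sum]
        exact sum_congr rfl fun _ _ => sum_comm
    _ = 2 ^ Fintype.card ι * ∑ s, f s ^ 2 := by
        simp [sum_walsh_mul_walsh, mul_sum, sq, mul_comm]

theorem walshCoeff_empty [Fintype ι] [DecidableEq ι] (f : (ι → Bool) → ℝ) :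
    walshCoeff f ∅ = ∑ s, f s := by
  simp [walshCoeff]

theorem walshCoeff_sub_const [Fintype ι] [DecidableEq ι] (f : (ι → Bool) → ℝ) (c : ℝ)
    {J : Finset ι} (hJ : J.Nonempty) : walshCoeff (fun s => f s - c) J = walshCoeff f J := by
  simp only [walshCoeff, sub_mul, sum_sub_distrib, ← mul_sum, sum_walsh_eq_zero hJ, mul_zero,
    sub_zero]

theorem sum_sq_le_of_abs_walshCoeff_le [Fintype ι] [DecidableEq ι] {f : (ι → Bool) → ℝ} {δ : ℝ}
    (hf : ∑ s, f s = 0) (hδ : ∀ J : Finset ι, J.Nonempty → |walshCoeff f J| ≤ δ) :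
    ∑ s, f s ^ 2 ≤ δ ^ 2 := by
  have hcoeff (J : Finset ι) : walshCoeff f J ^ 2 ≤ δ ^ 2 := by
    rcases J.eq_empty_or_nonempty with rfl | hJ
    · simp [walshCoeff_empty, hf, sq_nonneg]
    · exact sq_abs (walshCoeff f J) ▸ pow_le_pow_left₀ (abs_nonneg _) (hδ J hJ) 2
  have := calc 2 ^ Fintype.card ι * ∑ s, f s ^ 2
      = ∑ J, walshCoeff f J ^ 2 := (sum_walshCoeff_sq f).symm
    _ ≤ ∑ _J : Finset ι, δ ^ 2 := sum_le_sum fun J _ => hcoeff J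
    _ = 2 ^ Fintype.card ι * δ ^ 2 := by simp
  exact le_of_mul_le_mul_left this (by positivity)

end Walsh

theorem sum_le_sqrt_card_mul_of_sum_sq_le {α : Type*} [Fintype α] {f : α → ℝ} {δ : ℝ}
    (hδ : 0 ≤ δ) (hf : ∑ a, f a ^ 2 ≤ δ ^ 2) (A : Finset α) :
    ∑ a ∈ A, f a ≤ √(Fintype.card α) * δ := by
  refine le_of_sq_le_sq ?_ (by positivity)
  calc (∑ a ∈ A, f a) ^ 2
      ≤ #A * ∑ a ∈ A, f a ^ 2 := sq_sum_le_card_mul_sum_sq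
    _ ≤ Fintype.card α * δ ^ 2 := by
        gcongr
        · exact card_le_univ A
        · exact (sum_le_univ_sum_of_nonneg fun a => sq_nonneg (f a)).trans hf
    _ = (√(Fintype.card α) * δ) ^ 2 := by
        rw [mul_pow, Real.sq_sqrt (Nat.cast_nonneg _)]

theorem sum_le_half_add_of_abs_walshCoeff_le {ι : Type*} [Fintype ι] [DecidableEq ι]
    {S : (ι → Bool) → ℝ} {δ : ℝ} (hS : ∑ s, S s = 1) (hδ : 0 ≤ δ)
    (hbias : ∀ J : Finset ι, J.Nonempty → |walshCoeff S J| ≤ δ)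
    {A : Finset (ι → Bool)} (hA : 2 * #A ≤ 2 ^ Fintype.card ι) :
    ∑ s ∈ A, S s ≤ 1 / 2 + 2 ^ ((Fintype.card ι : ℝ) / 2) * δ := by
  set N : ℝ := 2 ^ Fintype.card ι
  have hN : (Fintype.card (ι → Bool) : ℝ) = N := by simp [N]
  have hcentered : ∑ s, (S s - N⁻¹) = 0 := by
    rw [sum_sub_distrib, hS, sum_const, card_univ, nsmul_eq_mul, hN,
      mul_inv_cancel₀ (by positivity), sub_self]
  have hsq := sum_sq_le_of_abs_walshCoeff_le hcentered fun J hJ =>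
    walshCoeff_sub_const S N⁻¹ hJ ▸ hbias J hJ
  have hdev := sum_le_sqrt_card_mul_of_sum_sq_le hδ hsq A
  have hmass : #A * N⁻¹ ≤ 1 / 2 := by
    have : (2 : ℝ) * #A ≤ N := by simp only [N]; exact_mod_cast hA
    rw [← div_eq_mul_inv, div_le_iff₀ (by positivity)]
    linarith
  have hsqrt : √(Fintype.card (ι → Bool) : ℝ) = 2 ^ ((Fintype.card ι : ℝ) / 2) := by
    rw [hN, Real.sqrt_eq_rpow]
    simp only [N]
    rw [← Real.rpow_natCast, ← Real.rpow_mul zero_le_two, mul_one_div]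
  calc ∑ s ∈ A, S s = ∑ s ∈ A, (S s - N⁻¹) + #A * N⁻¹ := by
        rw [sum_sub_distrib, sum_const, nsmul_eq_mul, sub_add_cancel]
    _ ≤ 2 ^ ((Fintype.card ι : ℝ) / 2) * δ + 1 / 2 := hsqrt ▸ add_le_add hdev hmass
    _ = 1 / 2 + 2 ^ ((Fintype.card ι : ℝ) / 2) * δ := add_comm _ _

theorem abs_walshCoeff_eq_biasJ {m : ℕ} (S : (Fin m → Bool) → ℝ) {J : Finset (Fin m)}
    (hJ : J ≠ ∅) : |walshCoeff S J| = biasJ m J S := by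
  have hterm (s : Fin m → Bool) :
      S s * walsh J s = if #{i ∈ J | s i} % 2 = 0 then S s else -S s := by
    rw [walsh_eq_neg_one_pow]
    split_ifs with h
    · rw [Even.neg_one_pow (Nat.even_iff.2 h), mul_one]
    · rw [Odd.neg_one_pow (Nat.odd_iff.2 (Nat.mod_two_ne_zero.1 h)), mul_neg_one]
  rw [walshCoeff, sum_congr rfl fun s _ => hterm s, sum_ite, sum_neg_distrib, ← sub_eq_add_neg,
    biasJ, if_neg hJ, abs_sub_comm]
  congr 2
  exact sum_congr (filter_congr fun _ _ => Nat.mod_two_ne_zero) fun _ _ => rfl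

section Hash

variable {ι G : Type*} [Fintype ι] [DecidableEq ι] [AddCommGroup G]

theorem sum_ite_flipAt (c : ι → G) (s : ι → Bool) (i : ι) :
    ∑ j, (if flipAt i s j then c j else 0) =
      ∑ j, (if s j then c j else 0) + if s i then -c i else c i := by
  rw [← add_sum_erase univ _ (mem_univ i), ← add_sum_erase univ _ (mem_univ i),
    sum_congr rfl fun j hj => by rw [flipAt_of_ne (ne_of_mem_erase hj)], flipAt_self]
  cases s i <;> simp; abel

theorem two_mul_card_filter_sum_ite_eq_zero_le [DecidableEq G] {c : ι → G} {i : ι}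
    (hc : c i ≠ 0) :
    2 * #{s : ι → Bool | ∑ j, (if s j then c j else 0) = 0} ≤ 2 ^ Fintype.card ι := by
  set A : Finset (ι → Bool) := {s | ∑ j, (if s j then c j else 0) = 0}
  have hmaps : ∀ s ∈ A, flipAt i s ∈ Aᶜ := by
    intro s hs
    rw [mem_compl]
    intro hflip
    simp only [A, mem_filter, mem_univ, true_and, sum_ite_flipAt] at hs hflip
    rw [hs, zero_add] at hflip
    exact hc (by split_ifs at hflip <;> simpa using hflip)
  have hinj := card_le_card_of_injOn _ hmaps (flipAt_involutive i).injective.injOn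
  have hsplit := card_compl_add_card A
  rw [Fintype.card_fun, Fintype.card_bool] at hsplit
  omega

end Hash

theorem quantum_hash_collision_delta_biased_general (d m : ℕ) [NeZero d]
    (k : Fin m → Fin d) (hk : k ≠ fun _ => 0) (δ : ℝ) (hδ0 : 0 < δ)
    (S : (Fin m → Bool) → ℝ) (hS1 : ∑ s : Fin m → Bool, S s = 1)
    (hbias : ∀ J : Finset (Fin m), J ≠ ∅ → biasJ m J S ≤ δ) :
    ∑ s ∈ Finset.univ.filter
        (fun s : Fin m → Bool =>
          ((∑ i : Fin m, if s i then (k i : ℕ) else 0 : ℕ) : ZMod d) = 0), S s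
      ≤ 1 / 2 + (2 : ℝ) ^ ((m : ℝ) / 2) * δ := by
  obtain ⟨i, hi⟩ := Function.ne_iff.1 hk
  have hki : ((k i : ℕ) : ZMod d) ≠ 0 := by
    rw [Ne, ZMod.natCast_eq_zero_iff]
    exact fun hdvd => hi (Fin.ext (Nat.eq_zero_of_dvd_of_lt hdvd (k i).isLt))
  have hwalsh (J : Finset (Fin m)) (hJ : J.Nonempty) : |walshCoeff S J| ≤ δ :=
    abs_walshCoeff_eq_biasJ S hJ.ne_empty ▸ hbias J hJ.ne_empty
  have key := sum_le_half_add_of_abs_walshCoeff_le hS1 hδ0.le hwalsh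
    (two_mul_card_filter_sum_ite_eq_zero_le (c := fun j => ((k j : ℕ) : ZMod d)) hki)
  simpa only [Fintype.card_fin, Nat.cast_sum, Nat.cast_ite, Nat.cast_zero] using key

/-- **Quantum hash collision probability with a `δ`-biased seed.**
Let `d ≥ 2` and `m ≥ 1`, let `k = (k₁, …, k_m)` with each `k_i ∈ {0, …, d−1}` and `k ≠ 0^m`,
let `δ ∈ (0,1)`, and let `S` be a `δ`-biased random variable on `{0,1}^m`.  Then
`Pr[∑ i, S_i k_i ≡ 0 (mod d)] ≤ 1/2 + 2^{m/2}·δ`. -/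
theorem quantum_hash_collision_delta_biased (d m : ℕ) [NeZero d] (hd : 2 ≤ d) (hm : 1 ≤ m)
    (k : Fin m → Fin d) (hk : k ≠ fun _ => 0) (δ : ℝ) (hδ0 : 0 < δ) (hδ1 : δ < 1)
    (S : (Fin m → Bool) → ℝ) (hS0 : ∀ s, 0 ≤ S s) (hS1 : ∑ s : Fin m → Bool, S s = 1)
    (hbias : ∀ J : Finset (Fin m), J ≠ ∅ → biasJ m J S ≤ δ) :
    ∑ s ∈ Finset.univ.filter
        (fun s : Fin m → Bool =>
          ((∑ i : Fin m, if s i then (k i : ℕ) else 0 : ℕ) : ZMod d) = 0), S s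
      ≤ 1 / 2 + (2 : ℝ) ^ ((m : ℝ) / 2) * δ :=
  quantum_hash_collision_delta_biased_general d m k hk δ hδ0 S hS1 hbias
end
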